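/- Fix D ≥ 0 and ε, δ ∈ [0,1), and assume G^δ_{D,ε}(X) < +∞. Then G^δ_{D,ε}(X) − 1 < R*(D, ε, δ) ≤ ⌊G^δ_{D,ε}(X)⌋. -/

import Mathlib

open scoped ENNReal
open MeasureTheory

noncomputable section

/-- The smooth max entropy `H^δ(P)` (base 2) of a probability distribution `P`
on a finite alphabet `𝒴`: the least `log₂ |𝒲|` over subsets `𝒲 ⊆ 𝒴` of
probability at least `1 - δ`. -/
def smoothMaxEnt {𝒴 : Type} [Fintype 𝒴] (P : 𝒴 → ℝ≥0∞) (δ : ℝ) : ℝ :=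
  sInf {r : ℝ | ∃ W : Finset 𝒴,
    ENNReal.ofReal (1 - δ) ≤ ∑ y ∈ W, P y ∧ r = Real.logb 2 (W.card)}

/-- A channel (conditional probability distribution) from `𝒳` to `𝒴`. -/
def IsChannel {𝒳 𝒴 : Type} [Fintype 𝒴] (W : 𝒳 → 𝒴 → ℝ≥0∞) : Prop :=
  ∀ x, ∑ y, W x y = 1

/-- The output marginal distribution of the channel `W` with input distribution `pX`. -/
def marginal {𝒳 𝒴 : Type} [Fintype 𝒳] (pX : 𝒳 → ℝ≥0∞) (W : 𝒳 → 𝒴 → ℝ≥0∞) : 𝒴 → ℝ≥0∞ :=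
  fun y => ∑ x, pX x * W x y

/-- `Pr{d(X,Y) > D}` for the joint law `pX · W`. -/
def chExcess {𝒳 𝒴 : Type} [Fintype 𝒳] [Fintype 𝒴] (pX : 𝒳 → ℝ≥0∞) (W : 𝒳 → 𝒴 → ℝ≥0∞)
    (d : 𝒳 → 𝒴 → ℝ) (D : ℝ) : ℝ≥0∞ :=
  ∑ x, ∑ y, if D < d x y then pX x * W x y else 0

/-- The quantity `G^δ_{D,ε}(X)` as a value in `[0,∞]`: the infimum of the smooth max
entropy of the output marginal, over channels whose excess-distortion probability is
at most `ε`; it equals `+∞` if no such channel exists. -/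
def Gq {𝒳 𝒴 : Type} [Fintype 𝒳] [Fintype 𝒴] (pX : 𝒳 → ℝ≥0∞) (d : 𝒳 → 𝒴 → ℝ)
    (D ε δ : ℝ) : ℝ≥0∞ :=
  ⨅ (W : 𝒳 → 𝒴 → ℝ≥0∞) (_ : IsChannel W) (_ : chExcess pX W d D ≤ ENNReal.ofReal ε),
    ENNReal.ofReal (smoothMaxEnt (marginal pX W) δ)

/-- `(f, g)` is a `(D, R, ε, δ)` code: `f` is a (possibly stochastic) encoder assigning
to each source symbol a probability distribution on binary strings (`List Bool`),
`g` is a decoder, the excess distortion probability is at most `ε`, and the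
overflow probability is at most `δ`. -/
def IsCode {𝒳 𝒴 : Type} [Fintype 𝒳] (pX : 𝒳 → ℝ≥0∞) (d : 𝒳 → 𝒴 → ℝ)
    (D R ε δ : ℝ) (f : 𝒳 → List Bool → ℝ≥0∞) (g : List Bool → 𝒴) : Prop :=
  (∀ x, ∑' w : List Bool, f x w = 1) ∧
  (∑ x, ∑' w : List Bool, (if D < d x (g w) then pX x * f x w else 0))
      ≤ ENNReal.ofReal ε ∧
  (∑ x, ∑' w : List Bool, (if R < (w.length : ℝ) then pX x * f x w else 0))
      ≤ ENNReal.ofReal δ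

/-- The deterministic encoder `f : 𝒳 → {0,1}*` viewed as a stochastic encoder. -/
def detEnc {𝒳 : Type} (f : 𝒳 → List Bool) : 𝒳 → List Bool → ℝ≥0∞ :=
  fun x w => if w = f x then 1 else 0

/-- The sum of the `j` largest values of `P`. -/
def topSum {𝒴 : Type} [Fintype 𝒴] (P : 𝒴 → ℝ≥0∞) (j : ℕ) : ℝ≥0∞ :=
  ⨆ (W : Finset 𝒴) (_ : W.card ≤ j), ∑ y ∈ W, P y

/-! Converse: composing the encoder of a `(D, R, ε, δ)` code with its decoder gives a test
channel with excess distortion at most `ε`, whose output lies, with probability at least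
`1 - δ`, in the decoder's image of the `2 ^ (⌊R⌋ + 1) - 1` strings of length at most `⌊R⌋`;
hence `G < ⌊R⌋ + 1`. Achievability: if `G < k + 1`, some admissible test channel has an output
set `𝒲` of probability at least `1 - δ` with `|𝒲| < 2 ^ (k + 1)`; encoding the channel output
by an injection sending `𝒲` to strings of length at most `k` gives a code of rate `k`.
So `R* = ⌊G⌋`. -/

def stringsLengthLE (k : ℕ) : Finset (List Bool) :=
  (Finset.range (k + 1)).biUnion fun n => Finset.univ.image (List.ofFn : (Fin n → Bool) → _)

@[simp]
theorem mem_stringsLengthLE {k : ℕ} {w : List Bool} :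
    w ∈ stringsLengthLE k ↔ w.length ≤ k := by
  simp only [stringsLengthLE, Finset.mem_biUnion, Finset.mem_range, Finset.mem_image,
    Finset.mem_univ, true_and]
  constructor
  · rintro ⟨n, hn, f, rfl⟩
    simpa using Nat.lt_succ_iff.1 hn
  · exact fun h => ⟨w.length, Nat.lt_succ_of_le h, w.get, List.ofFn_get w⟩

theorem card_stringsLengthLE (k : ℕ) : (stringsLengthLE k).card = 2 ^ (k + 1) - 1 := by
  rw [stringsLengthLE, Finset.card_biUnion]
  · simp [Finset.card_image_of_injective _ List.ofFn_injective, Nat.geomSum_eq le_rfl]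
  · intro m _ n _ hmn
    simp only [Function.onFun, Finset.disjoint_left, Finset.mem_image]
    rintro _ ⟨u, -, rfl⟩ ⟨v, -, huv⟩
    exact hmn (by simpa using (congrArg List.length huv).symm)

theorem exists_injective_length_le {α : Type*} [Fintype α] (s : Finset α) {k : ℕ}
    (hs : s.card < 2 ^ (k + 1)) :
    ∃ e : α → List Bool, Function.Injective e ∧ ∀ a ∈ s, (e a).length ≤ k := by
  classical
  obtain ⟨ι, hι⟩ := Function.Embedding.exists_of_card_le_finset (α := s)
    (s := stringsLengthLE k) (by rw [Fintype.card_coe, card_stringsLengthLE]; omega)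
  have hιk (a : s) : (ι a).length ≤ k := mem_stringsLengthLE.1 (hι ⟨a, rfl⟩)
  -- outside `s`, strings longer than `k` whose lengths separate the points
  let e (a : α) : List Bool :=
    if h : a ∈ s then ι ⟨a, h⟩ else List.replicate (k + 1 + Fintype.equivFin α a) true
  refine ⟨e, fun a b hab => ?_, fun a ha => by simpa [e, ha] using hιk ⟨a, ha⟩⟩
  have hlen := congrArg List.length hab
  by_cases ha : a ∈ s <;> by_cases hb : b ∈ s <;>
    simp only [e, ha, hb, dite_true, dite_false, List.length_replicate] at hab hlen
  · simpa using ι.injective hab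
  · have := hιk ⟨a, ha⟩; omega
  · have := hιk ⟨b, hb⟩; omega
  · simp only [add_right_inj, Fin.val_inj] at hlen
    exact (Fintype.equivFin α).injective hlen

theorem Real.logb_two_natCast_lt_iff {n m : ℕ} (hm : m ≠ 0) :
    Real.logb 2 n < m ↔ n < 2 ^ m := by
  rcases n.eq_zero_or_pos with rfl | hn
  · simp [Nat.pos_of_ne_zero hm]
  · rw [Real.logb_lt_iff_lt_rpow one_lt_two (by exact_mod_cast hn), Real.rpow_natCast]
    exact_mod_cast Iff.rfl

theorem ENNReal.ofReal_one_sub_le_iff {a b : ℝ≥0∞} (hab : a + b = 1) {δ : ℝ} (hδ : 0 ≤ δ) :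
    ENNReal.ofReal (1 - δ) ≤ a ↔ b ≤ ENNReal.ofReal δ := by
  have ha : a ≠ ⊤ := ne_top_of_le_ne_top ENNReal.one_ne_top (hab ▸ le_self_add)
  rw [ENNReal.ofReal_sub _ hδ, ENNReal.ofReal_one, tsub_le_iff_right, ← hab,
    ENNReal.add_le_add_iff_left ha]

section Pushforward

variable {α β γ : Type*} [DecidableEq γ]

def pushforward (μ : β → ℝ≥0∞) (φ : β → γ) (c : γ) : ℝ≥0∞ :=
  ∑' b, if φ b = c then μ b else 0

theorem tsum_ite_pushforward (μ : β → ℝ≥0∞) (φ : β → γ) (p : γ → Prop) [DecidablePred p] :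
    ∑' c, (if p c then pushforward μ φ c else 0) = ∑' b, if p (φ b) then μ b else 0 := by
  calc ∑' c, (if p c then pushforward μ φ c else 0)
      = ∑' c, ∑' b, if φ b = c then (if p c then μ b else 0) else 0 := by
        refine tsum_congr fun c => ?_
        split_ifs <;> simp [pushforward]
    _ = ∑' b, if p (φ b) then μ b else 0 := by
        rw [ENNReal.tsum_comm]
        exact tsum_congr fun b => by simp

theorem tsum_pushforward (μ : β → ℝ≥0∞) (φ : β → γ) :
    ∑' c, pushforward μ φ c = ∑' b, μ b := by
  simpa using tsum_ite_pushforward μ φ (fun _ => True)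

def jointProb [Fintype α] (pX : α → ℝ≥0∞) (K : α → β → ℝ≥0∞) (E : α → β → Prop)
    [∀ a, DecidablePred (E a)] : ℝ≥0∞ :=
  ∑ a, ∑' b, if E a b then pX a * K a b else 0

variable [Fintype α] (pX : α → ℝ≥0∞)

theorem jointProb_pushforward (K : α → β → ℝ≥0∞) (φ : β → γ) (E : α → γ → Prop)
    [∀ a, DecidablePred (E a)] :
    jointProb pX (fun a => pushforward (K a) φ) E = jointProb pX K (fun a b => E a (φ b)) := by
  refine Finset.sum_congr rfl fun a _ => ?_
  simp_rw [← mul_ite_zero, ENNReal.tsum_mul_left, tsum_ite_pushforward]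

theorem jointProb_mono (K : α → β → ℝ≥0∞) {E E' : α → β → Prop}
    [∀ a, DecidablePred (E a)] [∀ a, DecidablePred (E' a)] (h : ∀ a b, E a b → E' a b) :
    jointProb pX K E ≤ jointProb pX K E' := by
  refine Finset.sum_le_sum fun a _ => ENNReal.tsum_le_tsum fun b => ?_
  by_cases hE : E a b
  · simp [hE, h a b hE]
  · simp [hE]

theorem jointProb_add_jointProb_not (hpX : ∑ a, pX a = 1) {K : α → β → ℝ≥0∞}
    (hK : ∀ a, ∑' b, K a b = 1) (E : α → β → Prop) [∀ a, DecidablePred (E a)] :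
    jointProb pX K E + jointProb pX K (fun a b => ¬E a b) = 1 := by
  rw [jointProb, jointProb, ← Finset.sum_add_distrib, ← hpX]
  refine Finset.sum_congr rfl fun a _ => ?_
  calc ∑' b, (if E a b then pX a * K a b else 0) + ∑' b, (if ¬E a b then pX a * K a b else 0)
      = ∑' b, pX a * K a b := by
        rw [← ENNReal.tsum_add]
        exact tsum_congr fun b => by split_ifs <;> simp
    _ = pX a := by rw [ENNReal.tsum_mul_left, hK, mul_one]

end Pushforward

section SmoothMaxEnt

variable {𝒴 : Type} [Fintype 𝒴] {P : 𝒴 → ℝ≥0∞} {δ : ℝ}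

theorem smoothMaxEnt_le {s : Finset 𝒴} (hs : ENNReal.ofReal (1 - δ) ≤ ∑ y ∈ s, P y) :
    smoothMaxEnt P δ ≤ Real.logb 2 s.card :=
  csInf_le ⟨0, by
    rintro _ ⟨t, -, rfl⟩
    exact div_nonneg (Real.log_natCast_nonneg _) (Real.log_nonneg one_le_two)⟩ ⟨s, hs, rfl⟩

theorem exists_logb_card_lt_of_smoothMaxEnt_lt (hP : ENNReal.ofReal (1 - δ) ≤ ∑ y, P y) {r : ℝ}
    (h : smoothMaxEnt P δ < r) :
    ∃ s : Finset 𝒴, ENNReal.ofReal (1 - δ) ≤ ∑ y ∈ s, P y ∧ Real.logb 2 s.card < r := by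
  obtain ⟨_, ⟨s, hs, rfl⟩, hlt⟩ :=
    exists_lt_of_csInf_lt (by exact ⟨_, Finset.univ, hP, rfl⟩) h
  exact ⟨s, hs, hlt⟩

end SmoothMaxEnt

section Channel

variable {𝒳 𝒴 : Type} [Fintype 𝒳] [Fintype 𝒴] {pX : 𝒳 → ℝ≥0∞} {W : 𝒳 → 𝒴 → ℝ≥0∞}

theorem sum_marginal (hpX : ∑ x, pX x = 1) (hW : IsChannel W) : ∑ y, marginal pX W y = 1 := by
  simp only [marginal]
  rw [Finset.sum_comm]
  simp [← Finset.mul_sum, hW _, hpX]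

theorem sum_marginal_eq_jointProb [DecidableEq 𝒴] (s : Finset 𝒴) :
    ∑ y ∈ s, marginal pX W y = jointProb pX W (fun _ y => y ∈ s) := by
  simp only [jointProb, marginal, tsum_fintype, ← Finset.sum_filter, Finset.filter_mem_eq_inter,
    Finset.univ_inter]
  exact Finset.sum_comm

theorem chExcess_eq_jointProb (d : 𝒳 → 𝒴 → ℝ) (D : ℝ) :
    chExcess pX W d D = jointProb pX W (fun x y => D < d x y) := by
  simp only [chExcess, jointProb, tsum_fintype]

theorem Gq_le (d : 𝒳 → 𝒴 → ℝ) {D ε δ : ℝ} (hW : IsChannel W)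
    (hexc : chExcess pX W d D ≤ ENNReal.ofReal ε) :
    Gq pX d D ε δ ≤ ENNReal.ofReal (smoothMaxEnt (marginal pX W) δ) :=
  iInf_le_of_le W <| iInf_le_of_le hW <| iInf_le _ hexc

theorem exists_channel_of_Gq_lt (d : 𝒳 → 𝒴 → ℝ) {D ε δ : ℝ} {r : ℝ≥0∞}
    (h : Gq pX d D ε δ < r) :
    ∃ W : 𝒳 → 𝒴 → ℝ≥0∞, IsChannel W ∧ chExcess pX W d D ≤ ENNReal.ofReal ε ∧
      ENNReal.ofReal (smoothMaxEnt (marginal pX W) δ) < r := by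
  simpa only [Gq, iInf_lt_iff, exists_prop] using h

end Channel

section Code

variable {𝒳 𝒴 : Type} [Fintype 𝒳] [Fintype 𝒴] {pX : 𝒳 → ℝ≥0∞} (hpX : ∑ x, pX x = 1)
  (d : 𝒳 → 𝒴 → ℝ) {D ε δ : ℝ} (hδ : 0 ≤ δ)
include hpX hδ

theorem Gq_lt_floor_add_one_of_isCode {R : ℝ} {f : 𝒳 → List Bool → ℝ≥0∞} {g : List Bool → 𝒴}
    (hcode : IsCode pX d D R ε δ f g) : Gq pX d D ε δ < (⌊R⌋₊ + 1 : ℕ) := by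
  classical
  obtain ⟨hf, hdist, hover⟩ := hcode
  set k := ⌊R⌋₊
  let W (x : 𝒳) : 𝒴 → ℝ≥0∞ := pushforward (f x) g
  let 𝒲 : Finset 𝒴 := (stringsLengthLE k).image g
  have hW : IsChannel W := fun x => by
    rw [← tsum_fintype (L := .unconditional _), tsum_pushforward, hf x]
  have hexc : chExcess pX W d D ≤ ENNReal.ofReal ε := by
    rw [chExcess_eq_jointProb, jointProb_pushforward]
    exact hdist
  have hmass : ENNReal.ofReal (1 - δ) ≤ ∑ y ∈ 𝒲, marginal pX W y := by
    have hshort (x : 𝒳) (w : List Bool) (hw : ¬R < w.length) : g w ∈ 𝒲 :=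
      Finset.mem_image_of_mem g (mem_stringsLengthLE.2 (Nat.le_floor (not_lt.1 hw)))
    rw [sum_marginal_eq_jointProb, jointProb_pushforward]
    refine le_trans ?_ (jointProb_mono pX f hshort)
    rw [ENNReal.ofReal_one_sub_le_iff ((add_comm _ _).trans
      (jointProb_add_jointProb_not pX hpX hf _)) hδ]
    exact hover
  have hcard : 𝒲.card < 2 ^ (k + 1) := by
    refine Finset.card_image_le.trans_lt ?_
    rw [card_stringsLengthLE]
    exact Nat.sub_lt (by positivity) one_pos
  calc Gq pX d D ε δ ≤ ENNReal.ofReal (smoothMaxEnt (marginal pX W) δ) := Gq_le d hW hexc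
    _ ≤ ENNReal.ofReal (Real.logb 2 𝒲.card) := ENNReal.ofReal_le_ofReal (smoothMaxEnt_le hmass)
    _ < (k + 1 : ℕ) := (ENNReal.ofReal_lt_natCast k.succ_ne_zero).2
        ((Real.logb_two_natCast_lt_iff k.succ_ne_zero).2 hcard)

theorem isCode_pushforward [Nonempty 𝒴] {W : 𝒳 → 𝒴 → ℝ≥0∞} (hW : IsChannel W)
    (hexc : chExcess pX W d D ≤ ENNReal.ofReal ε) {𝒲 : Finset 𝒴}
    (hmass : ENNReal.ofReal (1 - δ) ≤ ∑ y ∈ 𝒲, marginal pX W y) {e : 𝒴 → List Bool}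
    (he : Function.Injective e) {k : ℕ} (hlen : ∀ y ∈ 𝒲, (e y).length ≤ k) :
    IsCode pX d D k ε δ (fun x => pushforward (W x) e) (Function.invFun e) := by
  classical
  refine ⟨fun x => by rw [tsum_pushforward, tsum_fintype, hW x], ?_, ?_⟩
  · change jointProb pX _ (fun x w => D < d x (Function.invFun e w)) ≤ _
    have hinv : ∀ y, Function.invFun e (e y) = y := Function.leftInverse_invFun he
    simpa only [jointProb_pushforward, hinv, ← chExcess_eq_jointProb] using hexc
  · have hlong (x : 𝒳) (y : 𝒴) (hy : (k : ℝ) < (e y).length) : y ∉ 𝒲 := fun hy𝒲 =>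
      (not_lt.2 (Nat.cast_le.2 (hlen y hy𝒲))) hy
    change jointProb pX _ (fun _ (w : List Bool) => (k : ℝ) < w.length) ≤ _
    rw [jointProb_pushforward]
    refine (jointProb_mono pX W hlong).trans ?_
    rw [← ENNReal.ofReal_one_sub_le_iff (jointProb_add_jointProb_not pX hpX
      (fun x => by rw [tsum_fintype]; exact hW x) _) hδ, ← sum_marginal_eq_jointProb]
    exact hmass

theorem exists_isCode_of_Gq_lt [Nonempty 𝒴] {k : ℕ} (h : Gq pX d D ε δ < (k + 1 : ℕ)) :
    ∃ f g, IsCode pX d D k ε δ f g := by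
  obtain ⟨W, hW, hexc, hH⟩ := exists_channel_of_Gq_lt d h
  obtain ⟨𝒲, hmass, hlog⟩ := exists_logb_card_lt_of_smoothMaxEnt_lt
    (by rw [sum_marginal hpX hW]; exact ENNReal.ofReal_le_one.2 (by linarith))
    ((ENNReal.ofReal_lt_natCast k.succ_ne_zero).1 hH)
  obtain ⟨e, he, hlen⟩ :=
    exists_injective_length_le 𝒲 ((Real.logb_two_natCast_lt_iff k.succ_ne_zero).1 hlog)
  exact ⟨_, _, isCode_pushforward hpX d hδ hW hexc hmass he hlen⟩

end Code

theorem stmt2_general {𝒳 𝒴 : Type} [Fintype 𝒳] [Fintype 𝒴] [Nonempty 𝒴]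
    (pX : 𝒳 → ℝ≥0∞) (hpX : ∑ x, pX x = 1)
    (d : 𝒳 → 𝒴 → ℝ)
    (D ε δ : ℝ) (hδ : 0 ≤ δ ∧ δ < 1)
    (hG : Gq pX d D ε δ ≠ ⊤) :
    (Gq pX d D ε δ).toReal - 1 <
        sInf {R : ℝ | 0 ≤ R ∧ ∃ (f : 𝒳 → List Bool → ℝ≥0∞) (g : List Bool → 𝒴),
          IsCode pX d D R ε δ f g} ∧
      sInf {R : ℝ | 0 ≤ R ∧ ∃ (f : 𝒳 → List Bool → ℝ≥0∞) (g : List Bool → 𝒴),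
          IsCode pX d D R ε δ f g} ≤ ((⌊(Gq pX d D ε δ).toReal⌋ : ℤ) : ℝ) := by
  set k := ⌊(Gq pX d D ε δ).toReal⌋₊
  have hGq_lt_iff (m : ℕ) : Gq pX d D ε δ < (m + 1 : ℕ) ↔ k ≤ m := by
    rw [← ENNReal.ofReal_toReal hG, ENNReal.ofReal_lt_natCast m.succ_ne_zero,
      ← Nat.floor_lt ENNReal.toReal_nonneg, Nat.lt_succ_iff]
  have hleast : IsLeast {R : ℝ | 0 ≤ R ∧ ∃ f g, IsCode pX d D R ε δ f g} k := by
    refine ⟨⟨k.cast_nonneg, exists_isCode_of_Gq_lt hpX d hδ.1 ((hGq_lt_iff k).2 le_rfl)⟩, ?_⟩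
    rintro R ⟨hR, f, g, hcode⟩
    have hk : k ≤ ⌊R⌋₊ := (hGq_lt_iff _).1 (Gq_lt_floor_add_one_of_isCode hpX d hδ.1 hcode)
    exact (Nat.cast_le.2 hk).trans (Nat.floor_le hR)
  rw [hleast.csInf_eq, ← Int.natCast_floor_eq_floor ENNReal.toReal_nonneg, Int.cast_natCast]
  exact ⟨by linarith [Nat.lt_floor_add_one (Gq pX d D ε δ).toReal], le_rfl⟩

/-- Two-sided bound on the optimal rate `R*(D,ε,δ)` for possibly stochastic codes:
`G^δ_{D,ε}(X) - 1 < R*(D,ε,δ) ≤ ⌊G^δ_{D,ε}(X)⌋`. -/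
theorem stmt2 {𝒳 𝒴 : Type} [Fintype 𝒳] [Fintype 𝒴] [Nonempty 𝒳] [Nonempty 𝒴]
    (pX : 𝒳 → ℝ≥0∞) (hpX : ∑ x, pX x = 1)
    (d : 𝒳 → 𝒴 → ℝ) (hd : ∀ x y, 0 ≤ d x y)
    (D ε δ : ℝ) (hD : 0 ≤ D) (hε : 0 ≤ ε ∧ ε < 1) (hδ : 0 ≤ δ ∧ δ < 1)
    (hG : Gq pX d D ε δ ≠ ⊤) :
    (Gq pX d D ε δ).toReal - 1 <
        sInf {R : ℝ | 0 ≤ R ∧ ∃ (f : 𝒳 → List Bool → ℝ≥0∞) (g : List Bool → 𝒴),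
          IsCode pX d D R ε δ f g} ∧
      sInf {R : ℝ | 0 ≤ R ∧ ∃ (f : 𝒳 → List Bool → ℝ≥0∞) (g : List Bool → 𝒴),
          IsCode pX d D R ε δ f g} ≤ ((⌊(Gq pX d D ε δ).toReal⌋ : ℤ) : ℝ) :=
  stmt2_general pX hpX d D ε δ hδ hG
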